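/- arXiv:1002.2883 — 2 statements merged into one kernel-verified Lean document; each statement's English description precedes it below -/
import Mathlib

section
/- Let X be a topological space and let τ be a topology on C(X,$) whose open sets are all openly isotone. Let ℱ be a filter on C(X,ℝ). Then ℱ converges to the zero function 0̄ in the topology τ^⇑ if and only if for every n ≥ 1 the image filter ℱ⁻(Wₙ) converges to X (the whole space, as an element of C(X,$)) in τ, where Wₙ = (−1/n, 1/n). -/
/-!
Convergence in `τ^⇑` is tested one open set `U ⊆ ℝ` at a time, against the limit `0̄⁻¹(U)`,
which is `X` or `∅` according as `0 ∈ U`. The limit `∅` is trivial: since the open sets of `τ`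
are upward closed, every open set containing `∅` is everything. For the limit `X`, upward
closedness lets a smaller open set `Wₙ ⊆ U` witness the convergence for `U`, and the `Wₙ` form a
neighbourhood basis of `0`.
-/

open TopologicalSpace Topology

def OpenlyIsotone {X : Type*} [TopologicalSpace X] (A : Set (Opens X)) : Prop :=
  ∀ ⦃U V : Opens X⦄, U ∈ A → U ≤ V → V ∈ A

def preim {X Z : Type*} [TopologicalSpace X] [TopologicalSpace Z]
    (f : C(X, Z)) (U : Opens Z) : Opens X :=
  ⟨f ⁻¹' U, U.isOpen.preimage f.continuous⟩

/-- The basic open neighborhood `Wₙ = (-1/n, 1/n)` of `0` in `ℝ`. -/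
def Wball (n : ℕ) : Opens ℝ :=
  ⟨Set.Ioo (-(1 / (n : ℝ))) (1 / (n : ℝ)), isOpen_Ioo⟩

/-- The topology `τ^⇑` on `C(X,ℝ)`: the initial topology induced by the maps
`f ↦ f⁻¹(U)` into `(C(X,$), τ)`, `U` ranging over open subsets of `ℝ`. -/
def upTop {X : Type*} [TopologicalSpace X] (τ : TopologicalSpace (Opens X)) :
    TopologicalSpace C(X, ℝ) :=
  ⨅ U : Opens ℝ, TopologicalSpace.induced (fun f : C(X, ℝ) => preim f U) τ

open Filter

section UpperOpens

variable {α β : Type*} [Preorder α] [TopologicalSpace α]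

theorem nhds_bot_eq_top_of_isUpperSet [OrderBot α]
    (hup : ∀ s : Set α, IsOpen s → IsUpperSet s) : 𝓝 (⊥ : α) = ⊤ := by
  refine top_unique fun s hs => ?_
  obtain ⟨t, hts, ht, hbot⟩ := mem_nhds_iff.1 hs
  exact mem_top.2 <|
    Set.eq_univ_of_subset hts (Set.eq_univ_of_forall fun _ => hup t ht bot_le hbot)

theorem Filter.Tendsto.mono_of_isUpperSet (hup : ∀ s : Set α, IsOpen s → IsUpperSet s)
    {l : Filter β} {g h : β → α} {a : α} (hg : Tendsto g l (𝓝 a)) (hgh : ∀ x, g x ≤ h x) :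
    Tendsto h l (𝓝 a) :=
  (nhds_basis_opens a).tendsto_right_iff.2 fun s ⟨has, hs⟩ =>
    ((nhds_basis_opens a).tendsto_right_iff.1 hg s ⟨has, hs⟩).mono fun x hx =>
      hup s hs (hgh x) hx

end UpperOpens

theorem OpenlyIsotone.isUpperSet {X : Type*} [TopologicalSpace X] {A : Set (Opens X)}
    (hA : OpenlyIsotone A) : IsUpperSet A :=
  fun _ _ hle hU => hA hU hle

section Preim

variable {X Z : Type*} [TopologicalSpace X] [TopologicalSpace Z]

theorem preim_mono (f : C(X, Z)) {U V : Opens Z} (h : U ≤ V) : preim f U ≤ preim f V :=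
  fun _ hx => h hx

theorem preim_zero_of_mem [Zero Z] {U : Opens Z} (h : (0 : Z) ∈ U) :
    preim (0 : C(X, Z)) U = ⊤ := by
  ext x
  simp [preim, h]

theorem preim_zero_of_notMem [Zero Z] {U : Opens Z} (h : (0 : Z) ∉ U) :
    preim (0 : C(X, Z)) U = ⊥ := by
  ext x
  simp [preim, h]

end Preim

theorem coe_Wball (n : ℕ) : (Wball n : Set ℝ) = Metric.ball 0 (1 / n) := by
  rw [Real.ball_eq_Ioo, zero_sub, zero_add]
  rfl

theorem nhds_zero_hasBasis_Wball : (𝓝 (0 : ℝ)).HasBasis (fun n => 0 < n) fun n => Wball n := by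
  simpa only [coe_Wball] using Metric.nhds_basis_ball_inv_nat_pos

theorem le_nhds_upTop_iff {X : Type*} [TopologicalSpace X] (τ : TopologicalSpace (Opens X))
    (F : Filter C(X, ℝ)) (f : C(X, ℝ)) :
    F ≤ @nhds _ (upTop τ) f ↔
      ∀ U : Opens ℝ, Tendsto (fun g : C(X, ℝ) => preim g U) F (@nhds _ τ (preim f U)) := by
  unfold upTop
  simp only [nhds_iInf, le_iInf_iff, nhds_induced, tendsto_iff_comap]

/-- A filter `ℱ` on `C(X,ℝ)` converges to the zero function in `τ^⇑` iff for every `n ≥ 1`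
the image filter `ℱ⁻(Wₙ)` converges to the whole space `X` in `τ`. -/
theorem tendsto_zero_iff {X : Type*} [TopologicalSpace X]
    (τ : TopologicalSpace (Opens X))
    (hiso : ∀ S : Set (Opens X), IsOpen[τ] S → OpenlyIsotone S)
    (F : Filter C(X, ℝ)) :
    F ≤ @nhds _ (upTop τ) (0 : C(X, ℝ)) ↔
      ∀ n : ℕ, 1 ≤ n →
        Filter.map (fun f : C(X, ℝ) => preim f (Wball n)) F ≤ @nhds _ τ (⊤ : Opens X) := by
  let _ : TopologicalSpace (Opens X) := τ
  have hup : ∀ S : Set (Opens X), IsOpen S → IsUpperSet S := fun S hS => (hiso S hS).isUpperSet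
  rw [le_nhds_upTop_iff]
  constructor
  · intro h n hn
    have h0 : (0 : ℝ) ∈ Wball n := mem_of_mem_nhds (nhds_zero_hasBasis_Wball.mem_of_mem hn)
    simpa only [preim_zero_of_mem h0, Tendsto] using h (Wball n)
  · intro h U
    by_cases h0 : (0 : ℝ) ∈ U
    · obtain ⟨n, hn, hWU⟩ := nhds_zero_hasBasis_Wball.mem_iff.1 (U.isOpen.mem_nhds h0)
      rw [preim_zero_of_mem h0]
      exact Tendsto.mono_of_isUpperSet hup (h n hn) fun f => preim_mono f hWU
    · rw [preim_zero_of_notMem h0, nhds_bot_eq_top_of_isUpperSet hup]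
      exact le_top
end

section
/- Let X be a completely regular Hausdorff topological space. Then C_p(X,ℝ), the space of continuous real-valued functions with the topology of pointwise convergence, has countable fan-tightness if and only if Xⁿ has the Menger–Hurewicz covering property for every n ∈ ℕ, i.e. for every sequence (𝒰_k)_{k<ω} of open covers of Xⁿ there exist finite subfamilies 𝒱_k ⊆ 𝒰_k such that ⋃_{k<ω} 𝒱_k is an open cover of Xⁿ. -/
/-!
If `C_p(X)` has countable fan-tightness at `0` and `(𝒰ₖ)` is a sequence of open covers of `Xⁿ`,
let `Sₖ` be the set of those `g` for which `{g < 1}ⁿ` is covered by finitely many members of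
`𝒰ₖ`. A tube lemma for finite sets and complete regularity put `0` in the closure of every `Sₖ`.
Finite `Fₖ ⊆ Sₖ` with `0` in the closure of their union then yield finite subfamilies covering
`Xⁿ`: every `y ∈ Xⁿ` has some `g ∈ ⋃ Fₖ` with `g (yᵢ) < 1` for all `i`.

Conversely, if `f` lies in the closure of every `Sₖ`, the sets
`{y ∈ Xⁿ | ∀ i, |g (yᵢ) - f (yᵢ)| < ε}` with `g ∈ Sₖ` form open covers of `Xⁿ`, and the Menger
property of `Xⁿ` picks finitely many `g` from each `Sₖ` that approximate `f` within `ε` on every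
set of at most `n` points. Splitting `(Sₖ)` into countably many subsequences handles all `n` and
`ε` at once.
-/

open TopologicalSpace Topology

/-- The topology of pointwise convergence on `C(X,ℝ)`, induced from the product topology
on `ℝ^X`. -/
def pointwiseTop (X : Type*) [TopologicalSpace X] : TopologicalSpace C(X, ℝ) :=
  TopologicalSpace.induced (fun f : C(X, ℝ) => (f : X → ℝ)) Pi.topologicalSpace

open Set Filter

def IsMenger (Y : Type*) [TopologicalSpace Y] : Prop :=
  ∀ 𝒰 : ℕ → Set (Set Y), (∀ k, (∀ U ∈ 𝒰 k, IsOpen U) ∧ ⋃₀ 𝒰 k = univ) →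
    ∃ 𝒱 : ℕ → Set (Set Y), (∀ k, 𝒱 k ⊆ 𝒰 k ∧ (𝒱 k).Finite) ∧ (⋃ k, ⋃₀ 𝒱 k) = univ

def HasCountableFanTightnessAt {Y : Type*} [TopologicalSpace Y] (y : Y) : Prop :=
  ∀ S : ℕ → Set Y, (∀ n, y ∈ closure (S n)) →
    ∃ F : ℕ → Set Y, (∀ n, F n ⊆ S n ∧ (F n).Finite) ∧ y ∈ closure (⋃ n, F n)

theorem IsMenger.exists_finite_biUnion_eq_univ {Y α : Type*} [TopologicalSpace Y]
    (hY : IsMenger Y) (W : α → Set Y) (T : ℕ → Set α) (hW : ∀ k, ∀ a ∈ T k, IsOpen (W a))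
    (hT : ∀ k, ⋃ a ∈ T k, W a = univ) :
    ∃ F : ℕ → Set α, (∀ k, F k ⊆ T k ∧ (F k).Finite) ∧ ⋃ k, ⋃ a ∈ F k, W a = univ := by
  obtain ⟨𝒱, h𝒱, h𝒱_cover⟩ := hY (fun k => W '' T k) fun k =>
    ⟨forall_mem_image.2 (hW k), by rw [sUnion_image, hT k]⟩
  have hpre : ∀ k, ∃ F ⊆ T k, F.Finite ∧ 𝒱 k = W '' F := fun k =>
    exists_subset_image_finite_and.1 ⟨𝒱 k, (h𝒱 k).1, (h𝒱 k).2, rfl⟩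
  choose F hFT hF hF𝒱 using hpre
  refine ⟨F, fun k => ⟨hFT k, hF k⟩, ?_⟩
  simpa only [← sUnion_image, ← hF𝒱] using h𝒱_cover

theorem exists_finite_selection_forall {α : Type*} {A : Set α → Prop}
    {P : ℕ → Set α → Prop} (hP : ∀ i, Monotone (P i))
    (h : ∀ i (T : ℕ → Set α), (∀ k, A (T k)) →
      ∃ F : ℕ → Set α, (∀ k, F k ⊆ T k ∧ (F k).Finite) ∧ P i (⋃ k, F k))
    (S : ℕ → Set α) (hS : ∀ k, A (S k)) :
    ∃ F : ℕ → Set α, (∀ k, F k ⊆ S k ∧ (F k).Finite) ∧ ∀ i, P i (⋃ k, F k) := by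
  choose G hG hPG using fun i => h i (fun k => S (Nat.pair i k)) fun k => hS _
  refine ⟨fun j => G j.unpair.1 j.unpair.2, fun j => ?_, fun i => hP i ?_ (hPG i)⟩
  · simpa only [Nat.pair_unpair] using hG j.unpair.1 j.unpair.2
  · exact iUnion_subset fun k => subset_iUnion_of_subset (Nat.pair i k) <| by
      simp only [Nat.unpair_pair, subset_rfl]

theorem exists_isOpen_superset_pi_subset {ι X : Type*} [Finite ι] [TopologicalSpace X]
    {K : Set X} (hK : K.Finite) {O : Set (ι → X)} (hO : IsOpen O)
    (hKO : univ.pi (fun _ => K) ⊆ O) :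
    ∃ V, IsOpen V ∧ K ⊆ V ∧ univ.pi (fun _ => V) ⊆ O := by
  have hbox : ∀ p ∈ univ.pi (fun _ => K), ∃ B : ι → Set X,
      (∀ i, IsOpen (B i) ∧ p i ∈ B i) ∧ univ.pi B ⊆ O :=
    fun p hp => isOpen_pi_iff'.1 hO p (hKO hp)
  choose! B hB hBO using hbox
  have hKn : (univ.pi fun _ : ι => K).Finite := Finite.pi fun _ => hK
  refine ⟨⋃ x ∈ K, ⋂ p ∈ univ.pi (fun _ => K), ⋂ i ∈ {i | p i = x}, B p i, ?_, ?_, ?_⟩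
  · exact isOpen_biUnion fun x _ => hKn.isOpen_biInter fun p hp =>
      (toFinite _).isOpen_biInter fun i _ => (hB p hp i).1
  · intro x hx
    exact mem_biUnion hx <| mem_iInter₂.2 fun p hp => mem_iInter₂.2 fun i (hi : p i = x) =>
      hi ▸ (hB p hp i).2
  · intro y hy
    simp only [Set.mem_pi, mem_univ, true_implies, mem_iUnion, mem_iInter, exists_prop] at hy
    choose p hpK hpB using hy
    exact hBO p (fun i _ => hpK i) fun i _ => hpB i p hpK i rfl

theorem exists_continuousMap_eqOn_zero_one_of_finite {X : Type*} [TopologicalSpace X]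
    [CompletelyRegularSpace X] {K C : Set X} (hK : K.Finite) (hC : IsClosed C)
    (hKC : Disjoint K C) : ∃ g : C(X, ℝ), EqOn g 0 K ∧ EqOn g 1 C := by
  have hsep : ∀ x ∈ K, ∃ h : X → unitInterval, Continuous h ∧ h x = 0 ∧ EqOn h 1 C :=
    fun x hx => CompletelyRegularSpace.completely_regular x C hC (hKC.notMem_of_mem_left hx)
  choose! h hh hx0 hC1 using hsep
  refine ⟨⟨fun y => ∏ x ∈ hK.toFinset, (h x y : ℝ), continuous_finsetProd _ fun x hx =>
    continuous_subtype_val.comp (hh x (hK.mem_toFinset.1 hx))⟩, fun x hx => ?_, fun y hy => ?_⟩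
  · exact Finset.prod_eq_zero (hK.mem_toFinset.2 hx) (by simp [hx0 x hx])
  · exact Finset.prod_eq_one fun x hx => by simp [hC1 x (hK.mem_toFinset.1 hx) hy]

theorem mem_closure_pointwiseTop_iff {X : Type*} [TopologicalSpace X] {f : C(X, ℝ)}
    {S : Set C(X, ℝ)} :
    f ∈ closure[pointwiseTop X] S ↔
      ∀ K : Set X, K.Finite → ∀ ε : ℝ, 0 < ε → ∃ g ∈ S, ∀ x ∈ K, |g x - f x| < ε := by
  have hbasis : (@nhds _ (pointwiseTop X) f).HasBasis
      (fun Kε : Set X × ℝ => Kε.1.Finite ∧ 0 < Kε.2)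
      fun Kε => (⇑) ⁻¹' Kε.1.pi fun x => Metric.ball (f x) Kε.2 := by
    rw [pointwiseTop, nhds_induced, nhds_pi]
    refine (hasBasis_pi_same_index (fun x => Metric.nhds_basis_ball) fun K ε hK hε => ?_).comap _
    have hsmall : ∀ᶠ δ in 𝓝[>] (0 : ℝ), ∀ x ∈ K, δ < ε x :=
      (eventually_all_finite hK).2 fun x hx => nhdsWithin_le_nhds (eventually_lt_nhds (hε x hx))
    obtain ⟨δ, hδε, hδ⟩ := (hsmall.and self_mem_nhdsWithin).exists
    exact ⟨δ, hδ, fun x hx => Metric.ball_subset_ball (hδε x hx).le⟩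
  let _ := pointwiseTop X
  simp only [mem_closure_iff_nhds_basis hbasis, mem_preimage, Set.mem_pi, Metric.mem_ball,
    Real.dist_eq, Prod.forall, and_imp]
  exact ⟨fun h K hK ε hε => h K ε hK hε, fun h K ε hK hε => h K hK ε hε⟩

def finitelyCoveringFunctions {X ι : Type*} [TopologicalSpace X] (𝒰 : Set (Set (ι → X))) :
    Set C(X, ℝ) :=
  {g | ∃ 𝒱 ⊆ 𝒰, 𝒱.Finite ∧ univ.pi (fun _ => {x | g x < 1}) ⊆ ⋃₀ 𝒱}

theorem zero_mem_closure_finitelyCoveringFunctions {X ι : Type*} [TopologicalSpace X]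
    [CompletelyRegularSpace X] [Finite ι] {𝒰 : Set (Set (ι → X))} (h𝒰 : ∀ U ∈ 𝒰, IsOpen U)
    (h𝒰_cover : ⋃₀ 𝒰 = univ) :
    (0 : C(X, ℝ)) ∈ closure[pointwiseTop X] (finitelyCoveringFunctions 𝒰) := by
  refine mem_closure_pointwiseTop_iff.2 fun K hK ε hε => ?_
  obtain ⟨𝒱, h𝒱𝒰, h𝒱, hK𝒱⟩ := (Finite.pi fun _ : ι => hK).isCompact.elim_finite_subcover_image
    (c := id) h𝒰 (by simp only [id, ← sUnion_eq_biUnion, h𝒰_cover, subset_univ])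
  obtain ⟨V, hV, hKV, hV𝒱⟩ := exists_isOpen_superset_pi_subset hK
    (isOpen_biUnion fun U hU => h𝒰 U (h𝒱𝒰 hU)) hK𝒱
  obtain ⟨g, hg0, hg1⟩ := exists_continuousMap_eqOn_zero_one_of_finite hK hV.isClosed_compl
    (disjoint_compl_right_iff_subset.2 hKV)
  refine ⟨g, ⟨𝒱, h𝒱𝒰, h𝒱, ?_⟩, fun x hx => by simpa [hg0 hx] using hε⟩
  have hsub : {x | g x < 1} ⊆ V := fun x (hx : g x < 1) => by
    by_contra hxV
    exact hx.ne (hg1 hxV)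
  simpa only [sUnion_eq_biUnion] using (pi_mono fun _ _ => hsub).trans hV𝒱

theorem isMenger_pi_of_hasCountableFanTightnessAt_zero {X ι : Type*} [TopologicalSpace X]
    [CompletelyRegularSpace X] [Finite ι]
    (h : @HasCountableFanTightnessAt _ (pointwiseTop X) 0) : IsMenger (ι → X) := by
  intro 𝒰 h𝒰
  obtain ⟨F, hF, hF0⟩ := h (fun k => finitelyCoveringFunctions (𝒰 k)) fun k =>
    zero_mem_closure_finitelyCoveringFunctions (h𝒰 k).1 (h𝒰 k).2
  have hwitness : ∀ k, ∀ g ∈ F k,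
      ∃ 𝒱 ⊆ 𝒰 k, 𝒱.Finite ∧ univ.pi (fun _ => {x | g x < 1}) ⊆ ⋃₀ 𝒱 :=
    fun k g hg => (hF k).1 hg
  choose! 𝒱 h𝒱𝒰 h𝒱 hg𝒱 using hwitness
  refine ⟨fun k => ⋃ g ∈ F k, 𝒱 k g, fun k => ⟨iUnion₂_subset (h𝒱𝒰 k), (hF k).2.biUnion (h𝒱 k)⟩,
    eq_univ_of_forall fun y => ?_⟩
  obtain ⟨g, hg, hgy⟩ := mem_closure_pointwiseTop_iff.1 hF0 (range y) (finite_range y) 1 one_pos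
  obtain ⟨k, hk⟩ := mem_iUnion.1 hg
  have hy : y ∈ univ.pi fun _ => {x | g x < 1} := fun i _ => by
    simpa using (abs_lt.1 (hgy (y i) (mem_range_self i))).2
  obtain ⟨U, hU, hyU⟩ := hg𝒱 k g hk hy
  exact mem_iUnion.2 ⟨k, U, mem_iUnion₂.2 ⟨g, hk, hU⟩, hyU⟩

theorem IsMenger.exists_finite_selection_approx {X ι : Type*} [TopologicalSpace X] [Finite ι]
    (hX : IsMenger (ι → X)) {f : C(X, ℝ)} {T : ℕ → Set C(X, ℝ)}
    (hT : ∀ k, f ∈ closure[pointwiseTop X] (T k)) {ε : ℝ} (hε : 0 < ε) :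
    ∃ F : ℕ → Set C(X, ℝ), (∀ k, F k ⊆ T k ∧ (F k).Finite) ∧
      ∀ y : ι → X, ∃ g ∈ ⋃ k, F k, ∀ i, |g (y i) - f (y i)| < ε := by
  let W : C(X, ℝ) → Set (ι → X) := fun g => {y | ∀ i, |g (y i) - f (y i)| < ε}
  have hW : ∀ g, IsOpen (W g) := fun g => by
    simp only [W, ofPred_forall]
    exact isOpen_iInter_of_finite fun i => isOpen_lt (by fun_prop) continuous_const
  have hT_cover : ∀ k, ⋃ g ∈ T k, W g = univ := fun k => eq_univ_of_forall fun y => by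
    obtain ⟨g, hg, hgy⟩ := mem_closure_pointwiseTop_iff.1 (hT k) (range y) (finite_range y) ε hε
    exact mem_iUnion₂.2 ⟨g, hg, fun i => hgy _ (mem_range_self i)⟩
  obtain ⟨F, hF, hF_cover⟩ := hX.exists_finite_biUnion_eq_univ W T (fun _ g _ => hW g) hT_cover
  refine ⟨F, hF, fun y => ?_⟩
  have hy : y ∈ ⋃ k, ⋃ g ∈ F k, W g := hF_cover ▸ mem_univ y
  obtain ⟨k, g, hg, hgy⟩ : ∃ k, ∃ g ∈ F k, y ∈ W g := by
    simpa only [mem_iUnion, exists_prop] using hy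
  exact ⟨g, mem_iUnion.2 ⟨k, hg⟩, hgy⟩

theorem IsMenger.exists_finite_selection_approx_forall {X ι : Type*} [TopologicalSpace X]
    [Finite ι] (hX : IsMenger (ι → X)) {f : C(X, ℝ)} {T : ℕ → Set C(X, ℝ)}
    (hT : ∀ k, f ∈ closure[pointwiseTop X] (T k)) :
    ∃ F : ℕ → Set C(X, ℝ), (∀ k, F k ⊆ T k ∧ (F k).Finite) ∧
      ∀ (y : ι → X) (ε : ℝ), 0 < ε → ∃ g ∈ ⋃ k, F k, ∀ i, |g (y i) - f (y i)| < ε := by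
  obtain ⟨F, hF, hFm⟩ := exists_finite_selection_forall (A := (f ∈ closure[pointwiseTop X] ·))
    (P := fun (m : ℕ) U => ∀ y : ι → X, ∃ g ∈ U, ∀ i, |g (y i) - f (y i)| < 1 / (m + 1))
    (fun _ _ _ hUV hU y => (hU y).imp fun _ hg => ⟨hUV hg.1, hg.2⟩)
    (fun _ _ hT => hX.exists_finite_selection_approx hT Nat.one_div_pos_of_nat) T hT
  refine ⟨F, hF, fun y ε hε => ?_⟩
  obtain ⟨m, hm⟩ := exists_nat_one_div_lt hε
  obtain ⟨g, hg, hgy⟩ := hFm m y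
  exact ⟨g, hg, fun i => (hgy i).trans hm⟩

theorem hasCountableFanTightnessAt_of_forall_isMenger {X : Type*} [TopologicalSpace X]
    (h : ∀ n, IsMenger (Fin n → X)) (f : C(X, ℝ)) :
    @HasCountableFanTightnessAt _ (pointwiseTop X) f := by
  intro S hS
  obtain ⟨F, hF, hFn⟩ := exists_finite_selection_forall (A := (f ∈ closure[pointwiseTop X] ·))
    (P := fun n U => ∀ (y : Fin n → X) (ε : ℝ), 0 < ε → ∃ g ∈ U, ∀ i, |g (y i) - f (y i)| < ε)
    (fun _ _ _ hUV hU y ε hε => (hU y ε hε).imp fun _ hg => ⟨hUV hg.1, hg.2⟩)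
    (fun n _ hT => (h n).exists_finite_selection_approx_forall hT) S hS
  refine ⟨F, hF, mem_closure_pointwiseTop_iff.2 fun K hK ε hε => ?_⟩
  obtain ⟨n, y, rfl⟩ := hK.fin_embedding
  obtain ⟨g, hg, hgy⟩ := hFn n y ε hε
  exact ⟨g, hg, forall_mem_range.2 hgy⟩

/-- For a completely regular Hausdorff space `X`, `C_p(X,ℝ)` has countable fan-tightness
if and only if `Xⁿ` has the Menger–Hurewicz covering property for every `n`. -/
theorem cp_fanTight_iff_menger {X : Type*} [TopologicalSpace X] [T35Space X] :
    (∀ (f : C(X, ℝ)) (S : ℕ → Set C(X, ℝ)),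
        (∀ n, f ∈ @closure _ (pointwiseTop X) (S n)) →
        ∃ F : ℕ → Set C(X, ℝ), (∀ n, F n ⊆ S n ∧ (F n).Finite) ∧
          f ∈ @closure _ (pointwiseTop X) (⋃ n, F n)) ↔
      ∀ n : ℕ, ∀ 𝒰 : ℕ → Set (Set (Fin n → X)),
        (∀ k, (∀ U ∈ 𝒰 k, IsOpen U) ∧ ⋃₀ 𝒰 k = Set.univ) →
        ∃ 𝒱 : ℕ → Set (Set (Fin n → X)),
          (∀ k, 𝒱 k ⊆ 𝒰 k ∧ (𝒱 k).Finite) ∧ (⋃ k, ⋃₀ 𝒱 k) = Set.univ :=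
  ⟨fun h _ => isMenger_pi_of_hasCountableFanTightnessAt_zero (h 0),
    hasCountableFanTightnessAt_of_forall_isMenger⟩
end
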